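/- arXiv:math/0511745 — 3 statements merged into one kernel-verified Lean document; each statement's English description precedes it below -/
import Mathlib

section
/- For all a, b ≥ 0 and β ∈ (0,1], one has (a+b)^(1+β) − a^(1+β) ≤ b^(1+β) + (1+β) · a^((1+β)/2) · b^((1+β)/2). -/
/-!
Writing `p = 1 + β`, the function `x ↦ a ^ p + x ^ p + p a ^ β x - (a + x) ^ p` vanishes at `0`
and is nondecreasing on `[0, ∞)`, since its derivative `p (x ^ β + a ^ β - (a + x) ^ β)` is
nonnegative by subadditivity of `t ↦ t ^ β`. Hence `(a + b) ^ p - a ^ p ≤ b ^ p + p a ^ β b`.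
The inequality is symmetric in `a` and `b`, and for `b ≤ a` the cross term `a ^ β b` is at most
the geometric mean `a ^ (p / 2) b ^ (p / 2)`.
-/

open Real Set

theorem add_rpow_one_add_le {a b β : ℝ} (ha : 0 ≤ a) (hb : 0 ≤ b) (hβ : 0 ≤ β) (hβ1 : β ≤ 1) :
    (a + b) ^ (1 + β) ≤ a ^ (1 + β) + b ^ (1 + β) + (1 + β) * a ^ β * b := by
  have hp : 1 ≤ 1 + β := by linarith
  let g : ℝ → ℝ := fun x ↦ a ^ (1 + β) + x ^ (1 + β) + (1 + β) * a ^ β * x - (a + x) ^ (1 + β)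
  have hg : ∀ x, HasDerivAt g ((1 + β) * x ^ β + (1 + β) * a ^ β - (1 + β) * (a + x) ^ β) x := by
    intro x
    have hpow : ∀ y : ℝ, HasDerivAt (fun y : ℝ ↦ y ^ (1 + β)) ((1 + β) * y ^ β) y := fun y ↦ by
      simpa using hasDerivAt_rpow_const (x := y) (Or.inr hp)
    exact ((((hpow x).const_add _).add ((hasDerivAt_id x).const_mul ((1 + β) * a ^ β))).sub
      ((hpow (a + x)).comp x ((hasDerivAt_id x).const_add a))).congr_deriv (by simp)
  have hmono : MonotoneOn g (Ici 0) := by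
    refine monotoneOn_of_hasDerivWithinAt_nonneg (convex_Ici 0)
      (fun x _ ↦ (hg x).continuousAt.continuousWithinAt) (fun x _ ↦ (hg x).hasDerivWithinAt) ?_
    intro x hx
    rw [interior_Ici] at hx
    nlinarith [rpow_add_le_add_rpow ha hx.le hβ hβ1]
  have hg0 : g 0 ≤ g b := hmono self_mem_Ici hb hb
  simp only [g, add_zero, zero_rpow (by linarith : 1 + β ≠ 0), mul_zero, sub_self] at hg0
  linarith

theorem rpow_mul_le_rpow_mul_rpow_of_le {a b β : ℝ} (hb : 0 ≤ b) (hba : b ≤ a) (hβ : 0 ≤ β)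
    (hβ1 : β ≤ 1) : a ^ β * b ≤ a ^ ((1 + β) / 2) * b ^ ((1 + β) / 2) := by
  have ha : 0 ≤ a := hb.trans hba
  calc a ^ β * b = a ^ β * (b ^ ((1 - β) / 2) * b ^ ((1 + β) / 2)) := by
        rw [← rpow_add' hb (by linarith), ← add_div, sub_add_add_cancel, add_self_div_two, rpow_one]
    _ ≤ a ^ β * (a ^ ((1 - β) / 2) * b ^ ((1 + β) / 2)) := by gcongr
    _ = a ^ ((1 + β) / 2) * b ^ ((1 + β) / 2) := by
        rw [← mul_assoc, ← rpow_add' ha (by linarith)]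
        ring_nf

theorem stmt_1 (a b β : ℝ) (ha : 0 ≤ a) (hb : 0 ≤ b) (hβ : 0 < β) (hβ1 : β ≤ 1) :
    (a + b) ^ (1 + β) - a ^ (1 + β) ≤
      b ^ (1 + β) + (1 + β) * a ^ ((1 + β) / 2) * b ^ ((1 + β) / 2) := by
  wlog hba : b ≤ a generalizing a b
  · have := this b a hb ha (le_of_not_ge hba)
    rw [add_comm b a] at this
    linarith [mul_right_comm (1 + β) (a ^ ((1 + β) / 2)) (b ^ ((1 + β) / 2))]
  have hcross := rpow_mul_le_rpow_mul_rpow_of_le hb hba hβ.le hβ1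
  linarith [add_rpow_one_add_le ha hb hβ.le hβ1,
    mul_le_mul_of_nonneg_left hcross (by linarith : (0 : ℝ) ≤ 1 + β)]
end

section
/- Let d > α > 0 and let p_t denote the transition density of the spherically symmetric α-stable process on ℝ^d, satisfying the self-similarity p_{au}(x) = a^{−d/α} p_u(x a^{−1/α}) and the bound p_1(x) ≤ C/(1+|x|^{d+α}). If d = α(1+β)/β with 0 < β < 1, then the function h(x) = ∫₀¹ p_u(x) u du belongs to L^{1+β}(ℝ^d), i.e. ∫_{ℝ^d} h(x)^{1+β} dx < ∞. -/
/-!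
Scaling turns the tail bound on `p 1` into `p u x ≤ C * min (u ^ (-d/α)) (u * ‖x‖ ^ (-(d+α)))`.
Integrating against `u du` over `(0, 1]` and splitting at `u = ‖x‖ ^ α` gives
`h x ≲ ‖x‖ ^ (-(d - 2α))`, finite since `d > 2α` (that is, `β < 1`), and `h x ≲ ‖x‖ ^ (-(d+α))`.
In the critical dimension `(d - 2α)(1 + β) = d(1 - β) < d < (d + α)(1 + β)`, so `h ^ (1 + β)` is
dominated by a radial function that is integrable both near the origin and at infinity.
-/

open MeasureTheory Real Set

theorem integrable_min_rpow_norm {E : Type*} [NormedAddCommGroup E] [NormedSpace ℝ E]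
    [FiniteDimensional ℝ E] [MeasurableSpace E] [BorelSpace E] [Nontrivial E]
    (μ : Measure E) [μ.IsAddHaarMeasure] {a b : ℝ}
    (ha : a < Module.finrank ℝ E) (hb : (Module.finrank ℝ E : ℝ) < b) :
    Integrable (fun x : E ↦ min (‖x‖ ^ (-a)) (‖x‖ ^ (-b))) μ := by
  set n := Module.finrank ℝ E
  have hn : 1 ≤ n := Module.finrank_pos
  have hpow : ∀ {y : ℝ} (c : ℝ), 0 < y → y ^ (n - 1) * y ^ (-c) = y ^ ((n : ℝ) - 1 - c) := by
    intro y c hy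
    rw [← rpow_natCast, ← rpow_add hy, Nat.cast_sub hn]
    ring_nf
  rw [integrable_fun_norm_addHaar μ (f := fun y ↦ min (y ^ (-a)) (y ^ (-b))),
    ← Ioc_union_Ioi_eq_Ioi zero_le_one]
  refine IntegrableOn.union ?_ ?_
  · refine Integrable.mono' ((intervalIntegrable_iff_integrableOn_Ioc_of_le zero_le_one).1
      (intervalIntegral.intervalIntegrable_rpow' (r := (n : ℝ) - 1 - a) (by linarith)))
      (by fun_prop) ((ae_restrict_iff' measurableSet_Ioc).2 (ae_of_all _ fun y hy ↦ ?_))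
    have hmin := le_min (rpow_nonneg hy.1.le (-a)) (rpow_nonneg hy.1.le (-b))
    rw [smul_eq_mul, norm_of_nonneg (mul_nonneg (pow_nonneg hy.1.le _) hmin),
      ← hpow a hy.1]
    exact mul_le_mul_of_nonneg_left (min_le_left _ _) (pow_nonneg hy.1.le _)
  · refine Integrable.mono' (integrableOn_Ioi_rpow_of_lt (a := (n : ℝ) - 1 - b) (by linarith)
      one_pos) (by fun_prop) ((ae_restrict_iff' measurableSet_Ioi).2 (ae_of_all _ fun y hy ↦ ?_))
    have hy : 0 < y := one_pos.trans hy
    have hmin := le_min (rpow_nonneg hy.le (-a)) (rpow_nonneg hy.le (-b))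
    rw [smul_eq_mul, norm_of_nonneg (mul_nonneg (by positivity) hmin), ← hpow b hy]
    exact mul_le_mul_of_nonneg_left (min_le_right _ _) (by positivity)

theorem rpow_le_mul_rpow_of_le_mul_rpow {y K r s q : ℝ} (hy : 0 ≤ y) (hK : 0 ≤ K) (hr : 0 ≤ r)
    (hq : 0 ≤ q) (h : y ≤ K * r ^ (-s)) : y ^ q ≤ K ^ q * r ^ (-(s * q)) := by
  calc y ^ q ≤ (K * r ^ (-s)) ^ q := rpow_le_rpow hy h hq
    _ = K ^ q * r ^ (-(s * q)) := by
      rw [mul_rpow hK (rpow_nonneg hr _), ← rpow_mul hr, neg_mul]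

theorem integral_Ioc_rpow_le {r t : ℝ} (hr : r < -1) (ht0 : 0 < t) (ht1 : t ≤ 1) :
    ∫ u in Ioc t 1, u ^ r ≤ t ^ (r + 1) / -(r + 1) := by
  rw [← intervalIntegral.integral_of_le ht1,
    integral_rpow (Or.inr ⟨hr.ne, notMem_uIcc_of_lt ht0 one_pos⟩), one_rpow,
    ← neg_div_neg_eq, neg_sub]
  exact div_le_div_of_nonneg_right (by linarith) (by linarith)

theorem integrableOn_min_mul_sq_mul_rpow {A C : ℝ} (hA : 0 ≤ A) (hC : 0 ≤ C) (r : ℝ) :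
    IntegrableOn (fun u ↦ min (A * u ^ 2) (C * u ^ r)) (Ioc 0 1) := by
  refine Integrable.mono' (g := fun u ↦ A * u ^ 2) (Continuous.integrableOn_Ioc (by fun_prop))
    (by fun_prop) ((ae_restrict_iff' measurableSet_Ioc).2 (ae_of_all _ fun u hu ↦ ?_))
  rw [norm_of_nonneg (le_min (by positivity) (mul_nonneg hC (rpow_nonneg hu.1.le _)))]
  exact min_le_left _ _

theorem integral_min_mul_sq_mul_rpow_le {d α C ρ : ℝ} (hα : 0 < α) (hd : 2 * α < d) (hC : 0 ≤ C)
    (hρ0 : 0 < ρ) (hρ1 : ρ ≤ 1) :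
    ∫ u in Ioc (0 : ℝ) 1, min (C * ρ ^ (-(d + α)) * u ^ 2) (C * u ^ (1 - d / α)) ≤
      C * (1 / 3 + α / (d - 2 * α)) * ρ ^ (-(d - 2 * α)) := by
  set t := ρ ^ α with ht
  have ht0 : 0 < t := by positivity
  have ht1 : t ≤ 1 := rpow_le_one hρ0.le hρ1 hα.le
  set g : ℝ → ℝ := fun u ↦ min (C * ρ ^ (-(d + α)) * u ^ 2) (C * u ^ (1 - d / α))
  have hg := integrableOn_min_mul_sq_mul_rpow (by positivity : 0 ≤ C * ρ ^ (-(d + α))) hC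
    (1 - d / α)
  have hexp : 1 - d / α + 1 = -((d - 2 * α) / α) := by field_simp; ring
  have hexp_neg : 1 - d / α < -1 := by
    have : 0 < (d - 2 * α) / α := div_pos (sub_pos.2 hd) hα
    linarith
  have hsmall : ∫ u in Ioc 0 t, g u ≤ C / 3 * ρ ^ (-(d - 2 * α)) :=
    calc ∫ u in Ioc 0 t, g u ≤ ∫ u in Ioc 0 t, C * ρ ^ (-(d + α)) * u ^ 2 :=
          setIntegral_mono_on (hg.mono_set (Ioc_subset_Ioc le_rfl ht1))
            (Continuous.integrableOn_Ioc (by fun_prop)) measurableSet_Ioc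
            fun u _ ↦ min_le_left _ _
      _ = C / 3 * (ρ ^ (-(d + α)) * ρ ^ (α * 3)) := by
          rw [integral_const_mul, ← intervalIntegral.integral_of_le ht0.le, integral_pow,
            rpow_mul hρ0.le, ← ht]
          norm_num
          ring
      _ = C / 3 * ρ ^ (-(d - 2 * α)) := by rw [← rpow_add hρ0]; ring_nf
  have hlarge : ∫ u in Ioc t 1, g u ≤ C * (α / (d - 2 * α)) * ρ ^ (-(d - 2 * α)) :=
    calc ∫ u in Ioc t 1, g u ≤ ∫ u in Ioc t 1, C * u ^ (1 - d / α) :=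
          setIntegral_mono_on (hg.mono_set (Ioc_subset_Ioc ht0.le le_rfl))
            (((intervalIntegrable_iff_integrableOn_Ioc_of_le ht1).1
              (intervalIntegral.intervalIntegrable_rpow
                (Or.inr (notMem_uIcc_of_lt ht0 one_pos)))).const_mul C)
            measurableSet_Ioc fun u _ ↦ min_le_right _ _
      _ ≤ C * (t ^ (1 - d / α + 1) / -(1 - d / α + 1)) := by
          rw [integral_const_mul]
          exact mul_le_mul_of_nonneg_left (integral_Ioc_rpow_le hexp_neg ht0 ht1) hC
      _ = C * (α / (d - 2 * α)) * ρ ^ (-(d - 2 * α)) := by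
          rw [hexp, ht, ← rpow_mul hρ0.le, mul_neg, mul_div_cancel₀ _ hα.ne', neg_neg]
          field_simp
  calc ∫ u in Ioc (0 : ℝ) 1, g u = (∫ u in Ioc 0 t, g u) + ∫ u in Ioc t 1, g u := by
        rw [← Ioc_union_Ioc_eq_Ioc ht0.le ht1]
        exact setIntegral_union (Ioc_disjoint_Ioc_of_le le_rfl) measurableSet_Ioc
          (hg.mono_set (Ioc_subset_Ioc le_rfl ht1)) (hg.mono_set (Ioc_subset_Ioc ht0.le le_rfl))
    _ ≤ _ := by linarith

section StableKernel

variable {E : Type*} [NormedAddCommGroup E] [NormedSpace ℝ E] {p : ℝ → E → ℝ} {d α C : ℝ}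

theorem kernel_le_mul_rpow_time
    (hscale : ∀ u, 0 < u → ∀ x, p u x = u ^ (-(d / α)) * p 1 (u ^ (-(1 / α)) • x))
    (hbound : ∀ x, p 1 x ≤ C / (1 + ‖x‖ ^ (d + α))) (hC : 0 ≤ C) {u : ℝ} (hu : 0 < u) (x : E) :
    p u x ≤ C * u ^ (-(d / α)) := by
  have hp1 : p 1 (u ^ (-(1 / α)) • x) ≤ C :=
    (hbound _).trans (div_le_self hC (le_add_of_nonneg_right (by positivity)))
  rw [hscale u hu x, mul_comm C]
  exact mul_le_mul_of_nonneg_left hp1 (by positivity)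

theorem kernel_le_mul_rpow_norm (hα : α ≠ 0)
    (hscale : ∀ u, 0 < u → ∀ x, p u x = u ^ (-(d / α)) * p 1 (u ^ (-(1 / α)) • x))
    (hbound : ∀ x, p 1 x ≤ C / (1 + ‖x‖ ^ (d + α))) (hC : 0 ≤ C) {u : ℝ} (hu : 0 < u)
    {x : E} (hx : x ≠ 0) :
    p u x ≤ C * u * ‖x‖ ^ (-(d + α)) := by
  set y : E := u ^ (-(1 / α)) • x
  have hy : ‖y‖ = u ^ (-(1 / α)) * ‖x‖ := by
    rw [norm_smul, norm_of_nonneg (by positivity)]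
  have hy0 : 0 < ‖y‖ := by
    rw [hy]
    have := norm_pos_iff.2 hx
    positivity
  have hp1 : p 1 y ≤ C * (u ^ ((d + α) / α) * ‖x‖ ^ (-(d + α))) :=
    calc p 1 y ≤ C / (1 + ‖y‖ ^ (d + α)) := hbound y
      _ ≤ C / ‖y‖ ^ (d + α) := by gcongr; linarith
      _ = C * (u ^ ((d + α) / α) * ‖x‖ ^ (-(d + α))) := by
        rw [div_eq_mul_inv, ← rpow_neg hy0.le, hy, mul_rpow (by positivity) (norm_nonneg x),
          ← rpow_mul hu.le]
        ring_nf
  have hexp : u ^ (-(d / α)) * u ^ ((d + α) / α) = u := by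
    rw [← rpow_add hu, show -(d / α) + (d + α) / α = 1 by field_simp; ring, rpow_one]
  calc p u x = u ^ (-(d / α)) * p 1 y := hscale u hu x
    _ ≤ u ^ (-(d / α)) * (C * (u ^ ((d + α) / α) * ‖x‖ ^ (-(d + α)))) := by gcongr
    _ = C * (u ^ (-(d / α)) * u ^ ((d + α) / α)) * ‖x‖ ^ (-(d + α)) := by ring
    _ = C * u * ‖x‖ ^ (-(d + α)) := by rw [hexp]

theorem kernel_mul_le_min (hα : α ≠ 0)
    (hscale : ∀ u, 0 < u → ∀ x, p u x = u ^ (-(d / α)) * p 1 (u ^ (-(1 / α)) • x))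
    (hbound : ∀ x, p 1 x ≤ C / (1 + ‖x‖ ^ (d + α))) (hC : 0 ≤ C) {u : ℝ} (hu : 0 < u)
    {x : E} (hx : x ≠ 0) :
    p u x * u ≤ min (C * ‖x‖ ^ (-(d + α)) * u ^ 2) (C * u ^ (1 - d / α)) := by
  refine le_min ?_ ?_
  · calc p u x * u ≤ C * u * ‖x‖ ^ (-(d + α)) * u :=
          mul_le_mul_of_nonneg_right (kernel_le_mul_rpow_norm hα hscale hbound hC hu hx) hu.le
      _ = C * ‖x‖ ^ (-(d + α)) * u ^ 2 := by ring
  · calc p u x * u ≤ C * u ^ (-(d / α)) * u :=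
          mul_le_mul_of_nonneg_right (kernel_le_mul_rpow_time hscale hbound hC hu x) hu.le
      _ = C * u ^ (1 - d / α) := by rw [mul_assoc, ← rpow_add_one hu.ne']; ring_nf

theorem integral_kernel_mul_le_decay (hα : α ≠ 0)
    (hscale : ∀ u, 0 < u → ∀ x, p u x = u ^ (-(d / α)) * p 1 (u ^ (-(1 / α)) • x))
    (hbound : ∀ x, p 1 x ≤ C / (1 + ‖x‖ ^ (d + α))) (hC : 0 ≤ C)
    (hp_nonneg : ∀ u x, 0 ≤ p u x) {x : E} (hx : x ≠ 0) :
    ∫ u in Ioc (0 : ℝ) 1, p u x * u ≤ C / 3 * ‖x‖ ^ (-(d + α)) :=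
  calc ∫ u in Ioc (0 : ℝ) 1, p u x * u ≤ ∫ u in Ioc (0 : ℝ) 1, C * ‖x‖ ^ (-(d + α)) * u ^ 2 :=
        setIntegral_mono_of_nonneg (fun u hu ↦ mul_nonneg (hp_nonneg u x) hu.1.le)
          (fun u hu ↦ (kernel_mul_le_min hα hscale hbound hC hu.1 hx).trans (min_le_left _ _))
          (Continuous.integrableOn_Ioc (by fun_prop))
    _ = C / 3 * ‖x‖ ^ (-(d + α)) := by
        rw [integral_const_mul, ← intervalIntegral.integral_of_le zero_le_one, integral_pow]
        ring

theorem integral_kernel_mul_le_riesz_of_norm_le_one (hα : 0 < α) (hd : 2 * α < d)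
    (hscale : ∀ u, 0 < u → ∀ x, p u x = u ^ (-(d / α)) * p 1 (u ^ (-(1 / α)) • x))
    (hbound : ∀ x, p 1 x ≤ C / (1 + ‖x‖ ^ (d + α))) (hC : 0 ≤ C)
    (hp_nonneg : ∀ u x, 0 ≤ p u x) {x : E} (hx : x ≠ 0) (hx1 : ‖x‖ ≤ 1) :
    ∫ u in Ioc (0 : ℝ) 1, p u x * u ≤ C * (1 / 3 + α / (d - 2 * α)) * ‖x‖ ^ (-(d - 2 * α)) :=
  calc ∫ u in Ioc (0 : ℝ) 1, p u x * u
      ≤ ∫ u in Ioc (0 : ℝ) 1, min (C * ‖x‖ ^ (-(d + α)) * u ^ 2) (C * u ^ (1 - d / α)) :=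
        setIntegral_mono_of_nonneg (fun u hu ↦ mul_nonneg (hp_nonneg u x) hu.1.le)
          (fun u hu ↦ kernel_mul_le_min hα.ne' hscale hbound hC hu.1 hx)
          (integrableOn_min_mul_sq_mul_rpow (by positivity) hC _)
    _ ≤ _ := integral_min_mul_sq_mul_rpow_le hα hd hC (norm_pos_iff.2 hx) hx1

theorem div_three_le_mul_one_third_add (hα : 0 < α) (hd : 2 * α < d) (hC : 0 ≤ C) :
    C / 3 ≤ C * (1 / 3 + α / (d - 2 * α)) := by
  have := sub_pos.2 hd
  have : 0 ≤ C * (α / (d - 2 * α)) := by positivity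
  linarith

theorem integral_kernel_mul_le_riesz (hα : 0 < α) (hd : 2 * α < d)
    (hscale : ∀ u, 0 < u → ∀ x, p u x = u ^ (-(d / α)) * p 1 (u ^ (-(1 / α)) • x))
    (hbound : ∀ x, p 1 x ≤ C / (1 + ‖x‖ ^ (d + α))) (hC : 0 ≤ C)
    (hp_nonneg : ∀ u x, 0 ≤ p u x) {x : E} (hx : x ≠ 0) :
    ∫ u in Ioc (0 : ℝ) 1, p u x * u ≤ C * (1 / 3 + α / (d - 2 * α)) * ‖x‖ ^ (-(d - 2 * α)) := by
  rcases le_or_gt ‖x‖ 1 with hx1 | hx1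
  · exact integral_kernel_mul_le_riesz_of_norm_le_one hα hd hscale hbound hC hp_nonneg hx hx1
  · calc ∫ u in Ioc (0 : ℝ) 1, p u x * u ≤ C / 3 * ‖x‖ ^ (-(d + α)) :=
          integral_kernel_mul_le_decay hα.ne' hscale hbound hC hp_nonneg hx
      _ ≤ C * (1 / 3 + α / (d - 2 * α)) * ‖x‖ ^ (-(d - 2 * α)) := by
          gcongr
          · exact div_three_le_mul_one_third_add hα hd hC
          · exact hx1.le
          · linarith

theorem integral_kernel_mul_rpow_le_min (hα : 0 < α) (hd : 2 * α < d)
    (hscale : ∀ u, 0 < u → ∀ x, p u x = u ^ (-(d / α)) * p 1 (u ^ (-(1 / α)) • x))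
    (hbound : ∀ x, p 1 x ≤ C / (1 + ‖x‖ ^ (d + α))) (hC : 0 ≤ C)
    (hp_nonneg : ∀ u x, 0 ≤ p u x) {q : ℝ} (hq : 0 ≤ q) {x : E} (hx : x ≠ 0) :
    (∫ u in Ioc (0 : ℝ) 1, p u x * u) ^ q ≤ (C * (1 / 3 + α / (d - 2 * α))) ^ q *
      min (‖x‖ ^ (-((d - 2 * α) * q))) (‖x‖ ^ (-((d + α) * q))) := by
  have hK : 0 ≤ C * (1 / 3 + α / (d - 2 * α)) :=
    (by positivity : 0 ≤ C / 3).trans (div_three_le_mul_one_third_add hα hd hC)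
  have hh : 0 ≤ ∫ u in Ioc (0 : ℝ) 1, p u x * u :=
    setIntegral_nonneg measurableSet_Ioc fun u hu ↦ mul_nonneg (hp_nonneg u x) hu.1.le
  have hdecay : ∫ u in Ioc (0 : ℝ) 1, p u x * u ≤
      C * (1 / 3 + α / (d - 2 * α)) * ‖x‖ ^ (-(d + α)) :=
    (integral_kernel_mul_le_decay hα.ne' hscale hbound hC hp_nonneg hx).trans
      (mul_le_mul_of_nonneg_right (div_three_le_mul_one_third_add hα hd hC) (by positivity))
  rw [mul_min_of_nonneg _ _ (by positivity)]
  exact le_min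
    (rpow_le_mul_rpow_of_le_mul_rpow hh hK (norm_nonneg x) hq
      (integral_kernel_mul_le_riesz hα hd hscale hbound hC hp_nonneg hx))
    (rpow_le_mul_rpow_of_le_mul_rpow hh hK (norm_nonneg x) hq hdecay)

end StableKernel

theorem stmt_3_general (d : ℕ) (α β C : ℝ) (hα : 0 < α)
    (hβ : 0 < β) (hβ1 : β < 1) (hcrit : (d : ℝ) = α * (1 + β) / β)
    (p : ℝ → EuclideanSpace ℝ (Fin d) → ℝ)
    (hp_nonneg : ∀ u x, 0 ≤ p u x)
    (hself : ∀ a u : ℝ, 0 < a → 0 < u → ∀ x,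
      p (a * u) x = a ^ (-((d : ℝ) / α)) * p u ((a ^ (-(1 / α)) : ℝ) • x))
    (hbound : ∀ x, p 1 x ≤ C / (1 + ‖x‖ ^ ((d : ℝ) + α))) :
    ∫⁻ x, ENNReal.ofReal ((∫ u in Ioc (0 : ℝ) 1, p u x * u) ^ (1 + β)) < ⊤ := by
  have hd : 2 * α < d := by
    rw [hcrit, lt_div_iff₀ hβ]
    nlinarith
  have hC : 0 ≤ C := by
    have h := (hp_nonneg 1 0).trans (hbound 0)
    rwa [norm_zero, zero_rpow (by positivity), add_zero, div_one] at h
  have hscale : ∀ u, 0 < u → ∀ x,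
      p u x = u ^ (-((d : ℝ) / α)) * p 1 ((u ^ (-(1 / α)) : ℝ) • x) := fun u hu x ↦ by
    simpa using hself u 1 hu one_pos x
  have hnear : ((d : ℝ) - 2 * α) * (1 + β) < d := by
    have : ((d : ℝ) - 2 * α) * (1 + β) = d * (1 - β) := by rw [hcrit]; field_simp; ring
    nlinarith
  have : Nonempty (Fin d) := ⟨⟨0, by exact_mod_cast (by positivity : (0 : ℝ) < 2 * α).trans hd⟩⟩
  have hint := integrable_min_rpow_norm (volume : Measure (EuclideanSpace ℝ (Fin d)))
    (b := ((d : ℝ) + α) * (1 + β)) (by rwa [finrank_euclideanSpace_fin])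
    (by rw [finrank_euclideanSpace_fin]; nlinarith)
  -- the pointwise bound fails only at `x = 0`, where `‖x‖ ^ (-s) = 0`
  exact (lintegral_mono_ae <| (Measure.ae_ne volume 0).mono fun x hx ↦ ENNReal.ofReal_le_ofReal <|
    integral_kernel_mul_rpow_le_min hα hd hscale hbound hC hp_nonneg (by linarith) hx).trans_lt
    (hint.const_mul _).lintegral_lt_top

theorem stmt_3 (d : ℕ) (α β C : ℝ) (hα : 0 < α) (hdα : α < (d : ℝ))
    (hβ : 0 < β) (hβ1 : β < 1) (hcrit : (d : ℝ) = α * (1 + β) / β)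
    (p : ℝ → EuclideanSpace ℝ (Fin d) → ℝ)
    (hp_meas : ∀ u, Measurable (p u))
    (hp_nonneg : ∀ u x, 0 ≤ p u x)
    (hself : ∀ a u : ℝ, 0 < a → 0 < u → ∀ x,
      p (a * u) x = a ^ (-((d : ℝ) / α)) * p u ((a ^ (-(1 / α)) : ℝ) • x))
    (hbound : ∀ x, p 1 x ≤ C / (1 + ‖x‖ ^ ((d : ℝ) + α))) :
    ∫⁻ x, ENNReal.ofReal ((∫ u in Ioc (0 : ℝ) 1, p u x * u) ^ (1 + β)) < ⊤ :=
  stmt_3_general d α β C hα hβ hβ1 hcrit p hp_nonneg hself hbound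
end

section
/- Let d > α > 0. If φ : ℝ^d → ℝ is measurable and sup_{x∈ℝ^d} (1+|x|^p)|φ(x)| < ∞ for some p > d, then the function Gφ(x) = C_{α,d} ∫_{ℝ^d} φ(y)/|x−y|^{d−α} dy satisfies sup_{x∈ℝ^d} (1+|x|^{d−α})|Gφ(x)| < ∞, where C_{α,d} = Γ((d−α)/2) / (2^α π^{d/2} Γ(α/2)). -/
/-!
Write β = d - α. Split the integral at the ball around x of radius ρ = (1 + ‖x‖) / 2.
On that ball 1 + ‖y‖ ≥ ρ, so |φ| ≲ ρ^(-p) there, while by scaling the kernel ‖x - y‖^(-β)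
has integral ≍ ρ^(d-β) over it; as p > d this part is ≲ ρ^(-β). Off the ball the kernel is at
most ρ^(-β), and φ is integrable because p > d. Hence |Gφ(x)| ≲ (1 + ‖x‖)^(-β).
-/

open MeasureTheory Real Set Metric Module
open scoped ENNReal

lemma one_add_rpow_le_two_rpow_sub_one_mul {p t : ℝ} (hp : 1 ≤ p) (ht : 0 ≤ t) :
    (1 + t) ^ p ≤ 2 ^ (p - 1) * (1 + t ^ p) := by
  have := NNReal.rpow_add_le_mul_rpow_add_rpow 1 ⟨t, ht⟩ hp
  rw [NNReal.one_rpow] at this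
  exact_mod_cast this

lemma abs_le_mul_one_add_rpow_neg {p t a C : ℝ} (hp : 1 ≤ p) (ht : 0 ≤ t)
    (h : (1 + t ^ p) * |a| ≤ C) : |a| ≤ 2 ^ (p - 1) * C * (1 + t) ^ (-p) := by
  have hpos : 0 < (1 + t) ^ p := by positivity
  rw [rpow_neg (by positivity), ← div_eq_mul_inv, le_div_iff₀ hpos]
  calc |a| * (1 + t) ^ p ≤ |a| * (2 ^ (p - 1) * (1 + t ^ p)) :=
        mul_le_mul_of_nonneg_left (one_add_rpow_le_two_rpow_sub_one_mul hp ht) (abs_nonneg a)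
    _ = 2 ^ (p - 1) * ((1 + t ^ p) * |a|) := by ring
    _ ≤ 2 ^ (p - 1) * C := mul_le_mul_of_nonneg_left h (by positivity)

lemma one_add_rpow_le_two_mul_one_add_rpow {t β : ℝ} (ht : 0 ≤ t) (hβ : 0 ≤ β) :
    1 + t ^ β ≤ 2 * (1 + t) ^ β := by
  have h1 : 1 ≤ (1 + t) ^ β := one_le_rpow (by linarith) hβ
  have h2 : t ^ β ≤ (1 + t) ^ β := rpow_le_rpow ht (by linarith) hβ
  linarith

lemma mul_half_rpow_add_mul_half_rpow_le {s A κ M β p d : ℝ} (hs : 1 ≤ s) (hdp : d ≤ p)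
    (hAκ : 0 ≤ A * κ) :
    A * (s / 2) ^ (-p) * ((s / 2) ^ (d - β) * κ) + M * (s / 2) ^ (-β) ≤
      2 ^ β * (A * κ * 2 ^ (p - d) + M) * s ^ (-β) := by
  have hs2 : 0 < s / 2 := by positivity
  have hpow : (s / 2) ^ (d - p) ≤ 2 ^ (p - d) :=
    calc (s / 2) ^ (d - p) ≤ (1 / 2) ^ (d - p) :=
          rpow_le_rpow_of_nonpos (by norm_num) (by linarith) (by linarith)
      _ = 2 ^ (p - d) := by rw [one_div, inv_rpow zero_le_two, ← rpow_neg zero_le_two, neg_sub]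
  have hhalf : (s / 2) ^ (-β) = 2 ^ β * s ^ (-β) := by
    rw [div_rpow (by positivity) zero_le_two, rpow_neg zero_le_two, div_inv_eq_mul, mul_comm]
  have hsplit : (s / 2) ^ (-p) * (s / 2) ^ (d - β) = (s / 2) ^ (d - p) * (s / 2) ^ (-β) := by
    rw [← rpow_add hs2, ← rpow_add hs2]
    ring_nf
  calc A * (s / 2) ^ (-p) * ((s / 2) ^ (d - β) * κ) + M * (s / 2) ^ (-β)
      = A * κ * (s / 2) ^ (d - p) * (s / 2) ^ (-β) + M * (s / 2) ^ (-β) := by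
        linear_combination (A * κ) * hsplit
    _ ≤ A * κ * 2 ^ (p - d) * (s / 2) ^ (-β) + M * (s / 2) ^ (-β) := by gcongr
    _ = 2 ^ β * (A * κ * 2 ^ (p - d) + M) * s ^ (-β) := by rw [hhalf]; ring

lemma half_one_add_norm_le_of_mem_ball {E : Type*} [SeminormedAddCommGroup E] {x y : E}
    (hy : y ∈ ball x ((1 + ‖x‖) / 2)) : (1 + ‖x‖) / 2 ≤ 1 + ‖y‖ := by
  rw [mem_ball_iff_norm] at hy
  have := norm_sub_norm_le x y
  rw [norm_sub_rev] at this
  linarith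

lemma setLIntegral_compl_ball_mul_rpow_neg_norm_sub_le {E : Type*} [NormedAddCommGroup E]
    [MeasurableSpace E] [OpensMeasurableSpace E] (μ : Measure E) {φ : E → ℝ} {β : ℝ}
    (hβ : 0 ≤ β) {x : E} {r : ℝ} (hr : 0 < r) :
    ∫⁻ y in (ball x r)ᶜ, ENNReal.ofReal |φ y| * ENNReal.ofReal (‖x - y‖ ^ (-β)) ∂μ ≤
      (∫⁻ y, ENNReal.ofReal |φ y| ∂μ) * ENNReal.ofReal (r ^ (-β)) := by
  calc ∫⁻ y in (ball x r)ᶜ, ENNReal.ofReal |φ y| * ENNReal.ofReal (‖x - y‖ ^ (-β)) ∂μ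
      ≤ ∫⁻ y in (ball x r)ᶜ, ENNReal.ofReal |φ y| * ENNReal.ofReal (r ^ (-β)) ∂μ := by
        refine setLIntegral_mono' measurableSet_ball.compl fun y hy => ?_
        have hxy : r ≤ ‖x - y‖ := by simpa [dist_eq_norm, norm_sub_rev] using hy
        exact mul_le_mul_right
          (ENNReal.ofReal_le_ofReal (rpow_le_rpow_of_nonpos hr hxy (neg_nonpos.2 hβ))) _
    _ ≤ (∫⁻ y, ENNReal.ofReal |φ y| ∂μ) * ENNReal.ofReal (r ^ (-β)) := by
        rw [lintegral_mul_const' _ _ ENNReal.ofReal_ne_top]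
        exact mul_le_mul_left (setLIntegral_le_lintegral _ _) _

section RieszPotential

variable {E : Type*} [NormedAddCommGroup E] [NormedSpace ℝ E] [FiniteDimensional ℝ E]
  [MeasurableSpace E] [BorelSpace E] (μ : Measure E) [μ.IsAddHaarMeasure] {β : ℝ}

lemma lintegral_ofReal_abs_lt_top_of_abs_le {φ : E → ℝ} {A p : ℝ} (hp : finrank ℝ E < p)
    (hφ : ∀ y, |φ y| ≤ A * (1 + ‖y‖) ^ (-p)) :
    ∫⁻ y, ENNReal.ofReal |φ y| ∂μ < ∞ :=
  calc ∫⁻ y, ENNReal.ofReal |φ y| ∂μ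
      ≤ ∫⁻ y, ENNReal.ofReal A * ENNReal.ofReal ((1 + ‖y‖) ^ (-p)) ∂μ :=
        lintegral_mono fun y =>
          (ENNReal.ofReal_le_ofReal (hφ y)).trans_eq (ENNReal.ofReal_mul' (by positivity))
    _ < ∞ := by
        rw [lintegral_const_mul' _ _ ENNReal.ofReal_ne_top]
        exact ENNReal.mul_lt_top ENNReal.ofReal_lt_top (finite_integral_one_add_norm hp)

lemma setIntegral_ball_rpow_neg_norm {r : ℝ} (hr : 0 < r) :
    ∫ y in ball 0 r, ‖y‖ ^ (-β) ∂μ =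
      r ^ ((finrank ℝ E : ℝ) - β) * ∫ y in ball 0 1, ‖y‖ ^ (-β) ∂μ := by
  have h := Measure.setIntegral_comp_smul_of_pos μ (fun y : E => ‖y‖ ^ (-β)) (ball 0 1) hr
  simp only [norm_smul, Real.norm_of_nonneg hr.le, mul_rpow hr.le (norm_nonneg _),
    integral_const_mul, smul_unitBall_of_pos hr, smul_eq_mul] at h
  rw [rpow_sub hr, rpow_natCast, div_eq_mul_inv, mul_assoc, ← rpow_neg hr.le, h,
    ← mul_assoc, mul_inv_cancel₀ (pow_ne_zero _ hr.ne'), one_mul]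

lemma integrableOn_ball_rpow_neg_norm (hβ : β < finrank ℝ E) (hd : 1 ≤ finrank ℝ E) (r : ℝ) :
    IntegrableOn (fun y : E => ‖y‖ ^ (-β)) (ball 0 r) μ :=
  integrableOn_ball_of_norm_le_rpow (C := 1) hd hβ
    (ae_of_all _ fun y => by simp [abs_of_nonneg (rpow_nonneg (norm_nonneg y) _)])
    (by fun_prop : Measurable fun y : E => ‖y‖ ^ (-β)).aestronglyMeasurable

lemma lintegral_ball_rpow_neg_norm_sub (hβ : β < finrank ℝ E) (hd : 1 ≤ finrank ℝ E)
    (x : E) {r : ℝ} (hr : 0 < r) :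
    ∫⁻ y in ball x r, ENNReal.ofReal (‖x - y‖ ^ (-β)) ∂μ =
      ENNReal.ofReal (r ^ ((finrank ℝ E : ℝ) - β) * ∫ y in ball 0 1, ‖y‖ ^ (-β) ∂μ) := by
  rw [← setIntegral_ball_rpow_neg_norm μ hr,
    ofReal_integral_eq_lintegral_ofReal (integrableOn_ball_rpow_neg_norm μ hβ hd r)
      (ae_of_all _ fun y => rpow_nonneg (norm_nonneg y) _),
    ← lintegral_indicator measurableSet_ball, ← lintegral_indicator measurableSet_ball,
    ← lintegral_sub_right_eq_self (fun z => (ball 0 r).indicator _ z) x]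
  congr 1 with y
  have hmem : y ∈ ball x r ↔ y - x ∈ ball 0 r := by simp [dist_eq_norm]
  by_cases hy : y ∈ ball x r
  · rw [indicator_of_mem hy, indicator_of_mem (hmem.1 hy), norm_sub_rev]
  · rw [indicator_of_notMem hy, indicator_of_notMem (mt hmem.2 hy)]

variable {φ : E → ℝ}

lemma setLIntegral_ball_mul_rpow_neg_norm_sub_le (hβ : β < finrank ℝ E)
    (hd : 1 ≤ finrank ℝ E) {x : E} {r b : ℝ} (hr : 0 < r) (hb : ∀ y ∈ ball x r, |φ y| ≤ b) :
    ∫⁻ y in ball x r, ENNReal.ofReal |φ y| * ENNReal.ofReal (‖x - y‖ ^ (-β)) ∂μ ≤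
      ENNReal.ofReal b *
        ENNReal.ofReal (r ^ ((finrank ℝ E : ℝ) - β) * ∫ y in ball 0 1, ‖y‖ ^ (-β) ∂μ) := by
  calc ∫⁻ y in ball x r, ENNReal.ofReal |φ y| * ENNReal.ofReal (‖x - y‖ ^ (-β)) ∂μ
      ≤ ∫⁻ y in ball x r, ENNReal.ofReal b * ENNReal.ofReal (‖x - y‖ ^ (-β)) ∂μ :=
        setLIntegral_mono' measurableSet_ball fun y hy =>
          mul_le_mul_left (ENNReal.ofReal_le_ofReal (hb y hy)) _
    _ = _ := by
        rw [lintegral_const_mul' _ _ ENNReal.ofReal_ne_top,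
          lintegral_ball_rpow_neg_norm_sub μ hβ hd x hr]

theorem exists_lintegral_mul_rpow_neg_norm_sub_le (hβ0 : 0 ≤ β) (hβ : β < finrank ℝ E)
    {A p : ℝ} (hp : finrank ℝ E < p) (hφ : ∀ y, |φ y| ≤ A * (1 + ‖y‖) ^ (-p)) :
    ∃ B, 0 ≤ B ∧ ∀ x, ∫⁻ y, ENNReal.ofReal |φ y| * ENNReal.ofReal (‖x - y‖ ^ (-β)) ∂μ ≤
      ENNReal.ofReal (B * (1 + ‖x‖) ^ (-β)) := by
  have hd : 1 ≤ finrank ℝ E := Nat.cast_pos.mp (hβ0.trans_lt hβ)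
  set M := (∫⁻ y, ENNReal.ofReal |φ y| ∂μ).toReal
  have hM : ∫⁻ y, ENNReal.ofReal |φ y| ∂μ = ENNReal.ofReal M :=
    (ENNReal.ofReal_toReal (lintegral_ofReal_abs_lt_top_of_abs_le μ hp hφ).ne).symm
  set κ := ∫ y in ball 0 1, ‖y‖ ^ (-β) ∂μ
  have hκ : 0 ≤ κ :=
    setIntegral_nonneg measurableSet_ball fun y _ => rpow_nonneg (norm_nonneg y) _
  have hA : 0 ≤ A := by simpa using (abs_nonneg _).trans (hφ 0)
  refine ⟨2 ^ β * (A * κ * 2 ^ (p - finrank ℝ E) + M), by positivity, fun x => ?_⟩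
  set s := 1 + ‖x‖
  have hs : 1 ≤ s := le_add_of_nonneg_right (norm_nonneg x)
  have hs2 : 0 < s / 2 := by positivity
  have hnear : ∀ y ∈ ball x (s / 2), |φ y| ≤ A * (s / 2) ^ (-p) := fun y hy =>
    (hφ y).trans (mul_le_mul_of_nonneg_left (rpow_le_rpow_of_nonpos hs2
      (half_one_add_norm_le_of_mem_ball hy) (by linarith)) hA)
  rw [← lintegral_add_compl _ (measurableSet_ball (x := x) (ε := s / 2))]
  calc _ ≤ ENNReal.ofReal (A * (s / 2) ^ (-p)) *
          ENNReal.ofReal ((s / 2) ^ ((finrank ℝ E : ℝ) - β) * κ) +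
        ENNReal.ofReal M * ENNReal.ofReal ((s / 2) ^ (-β)) := by
        rw [← hM]
        exact add_le_add (setLIntegral_ball_mul_rpow_neg_norm_sub_le μ hβ hd hs2 hnear)
          (setLIntegral_compl_ball_mul_rpow_neg_norm_sub_le μ hβ0 hs2)
    _ = ENNReal.ofReal (A * (s / 2) ^ (-p) * ((s / 2) ^ ((finrank ℝ E : ℝ) - β) * κ) +
          M * (s / 2) ^ (-β)) := by
        rw [← ENNReal.ofReal_mul (by positivity), ← ENNReal.ofReal_mul (by positivity),
          ← ENNReal.ofReal_add (by positivity) (by positivity)]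
    _ ≤ ENNReal.ofReal (2 ^ β * (A * κ * 2 ^ (p - finrank ℝ E) + M) * s ^ (-β)) :=
        ENNReal.ofReal_le_ofReal
          (mul_half_rpow_add_mul_half_rpow_le hs hp.le (mul_nonneg hA hκ))

theorem exists_abs_integral_div_rpow_norm_sub_le (hβ0 : 0 ≤ β) (hβ : β < finrank ℝ E)
    {A p : ℝ} (hp : finrank ℝ E < p) (hφ : ∀ y, |φ y| ≤ A * (1 + ‖y‖) ^ (-p)) :
    ∃ B, 0 ≤ B ∧ ∀ x, |∫ y, φ y / ‖x - y‖ ^ β ∂μ| ≤ B * (1 + ‖x‖) ^ (-β) := by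
  obtain ⟨B, hB0, hB⟩ := exists_lintegral_mul_rpow_neg_norm_sub_le μ hβ0 hβ hp hφ
  refine ⟨B, hB0, fun x => ?_⟩
  have hnorm : ∀ y, ENNReal.ofReal ‖φ y / ‖x - y‖ ^ β‖ =
      ENNReal.ofReal |φ y| * ENNReal.ofReal (‖x - y‖ ^ (-β)) := fun y => by
    rw [norm_div, norm_of_nonneg (rpow_nonneg (norm_nonneg _) _), Real.norm_eq_abs,
      div_eq_mul_inv, ← rpow_neg (norm_nonneg _), ENNReal.ofReal_mul (abs_nonneg _)]
  rw [← Real.norm_eq_abs]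
  exact (norm_integral_le_lintegral_norm _).trans
    (ENNReal.toReal_le_of_le_ofReal (by positivity) ((lintegral_congr hnorm).trans_le (hB x)))

end RieszPotential

theorem stmt_4_general (d : ℕ) (α : ℝ) (hα : 0 < α) (hdα : α < (d : ℝ))
    (φ : EuclideanSpace ℝ (Fin d) → ℝ)
    (p : ℝ) (hp : (d : ℝ) < p)
    (hdecay : ∃ C, ∀ x, (1 + ‖x‖ ^ p) * |φ x| ≤ C) :
    ∃ C', ∀ x, (1 + ‖x‖ ^ ((d : ℝ) - α)) *
      |Real.Gamma (((d : ℝ) - α) / 2) /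
          (2 ^ α * Real.pi ^ ((d : ℝ) / 2) * Real.Gamma (α / 2)) *
        ∫ y, φ y / ‖x - y‖ ^ ((d : ℝ) - α)| ≤ C' := by
  obtain ⟨C, hC⟩ := hdecay
  have hdim : (finrank ℝ (EuclideanSpace ℝ (Fin d)) : ℝ) = d := by
    rw [finrank_euclideanSpace_fin]
  have hd : (1 : ℝ) ≤ d := Nat.one_le_cast.mpr (Nat.cast_pos.mp (hα.trans hdα))
  obtain ⟨B, hB0, hB⟩ := exists_abs_integral_div_rpow_norm_sub_le volume (β := d - α)
    (by linarith) (by linarith) (by linarith)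
    fun y => abs_le_mul_one_add_rpow_neg (by linarith) (norm_nonneg y) (hC y)
  set c := Real.Gamma (((d : ℝ) - α) / 2) /
    (2 ^ α * Real.pi ^ ((d : ℝ) / 2) * Real.Gamma (α / 2))
  refine ⟨|c| * (2 * B), fun x => ?_⟩
  have hx : 0 < 1 + ‖x‖ := by positivity
  rw [abs_mul]
  calc (1 + ‖x‖ ^ ((d : ℝ) - α)) * (|c| * |∫ y, φ y / ‖x - y‖ ^ ((d : ℝ) - α)|)
      ≤ 2 * (1 + ‖x‖) ^ ((d : ℝ) - α) * (|c| * (B * (1 + ‖x‖) ^ (-((d : ℝ) - α)))) := by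
        gcongr
        · exact one_add_rpow_le_two_mul_one_add_rpow (norm_nonneg x) (by linarith)
        · exact hB x
    _ = |c| * (2 * B) := by
        rw [rpow_neg hx.le]
        field_simp

theorem stmt_4 (d : ℕ) (α : ℝ) (hα : 0 < α) (hdα : α < (d : ℝ))
    (φ : EuclideanSpace ℝ (Fin d) → ℝ) (hφ : Measurable φ)
    (p : ℝ) (hp : (d : ℝ) < p)
    (hdecay : ∃ C, ∀ x, (1 + ‖x‖ ^ p) * |φ x| ≤ C) :
    ∃ C', ∀ x, (1 + ‖x‖ ^ ((d : ℝ) - α)) *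
      |Real.Gamma (((d : ℝ) - α) / 2) /
          (2 ^ α * Real.pi ^ ((d : ℝ) / 2) * Real.Gamma (α / 2)) *
        ∫ y, φ y / ‖x - y‖ ^ ((d : ℝ) - α)| ≤ C' :=
  stmt_4_general d α hα hdα φ p hp hdecay
end
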